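/- Let H(t) be a family of n×n Hermitian matrices, for t ∈ (0, t₀), of the block form H(t) = [[A(t), B(t), c(t)],[B(t)*, D(t)/t, E(t)/t],[c(t)*, E(t)*/t, d(t)/t²]] where A(t) → A (r×r Hermitian), B(t) → B, c(t) → c (r×1), D(t) → D ((n-r-1)×(n-r-1) Hermitian), E(t) → E, d(t) → d > 0 (scalar) as t → 0⁺. If the Schur complement A - c c*/d is positive definite and D is positive definite, then H(t) is positive definite for all sufficiently small t > 0. -/

import Mathlib

/-!
Conjugating `H(t)` by `diag(1, √t, t)` removes the powers of `1/t` from the diagonal blocks and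
multiplies the off-diagonal blocks by `√t` or `t`, so the conjugated matrices converge to the block
diagonal matrix `diag(A, D, d)`. This limit is positive definite, since `A = (A - c c*/d) + c c*/d`
is the sum of a positive definite and a positive semidefinite matrix. Positive definiteness is an
open condition on Hermitian matrices (the quadratic form is bounded below on the compact unit
sphere, uniformly for nearby matrices), so the conjugated matrices, and hence `H(t)`, are positive
definite for small `t > 0`.
-/

open Matrix Filter Topology
open scoped ComplexOrder

namespace Matrix

section Openness

variable {𝕜 n : Type*} [RCLike 𝕜] [Fintype n]

theorem posDef_of_re_pos_on_sphere {M : Matrix n n 𝕜} (hM : M.IsHermitian)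
    (hpos : ∀ x ∈ Metric.sphere (0 : n → 𝕜) 1, 0 < RCLike.re (star x ⬝ᵥ M *ᵥ x)) :
    M.PosDef := by
  refine .of_dotProduct_mulVec_pos hM fun x hx =>
    RCLike.pos_iff.2 ⟨?_, hM.im_star_dotProduct_mulVec_self x⟩
  have hnorm : 0 < ‖x‖ := norm_pos_iff.2 hx
  set u : n → 𝕜 := (‖x‖⁻¹ : 𝕜) • x
  have hu : u ∈ Metric.sphere (0 : n → 𝕜) 1 := by simp [u, norm_smul, hnorm.ne']
  have hxu : x = (‖x‖ : 𝕜) • u := by simp [u, smul_smul, hnorm.ne']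
  rw [hxu, star_smul, mulVec_smul, dotProduct_smul, smul_dotProduct, smul_eq_mul, smul_eq_mul,
    RCLike.star_def, RCLike.conj_ofReal, ← mul_assoc, ← RCLike.ofReal_mul, RCLike.re_ofReal_mul]
  exact mul_pos (mul_pos hnorm hnorm) (hpos u hu)

theorem PosDef.eventually_re_pos_on_sphere {L : Matrix n n 𝕜} (hL : L.PosDef) :
    ∀ᶠ M in 𝓝 L, ∀ x ∈ Metric.sphere (0 : n → 𝕜) 1, 0 < RCLike.re (star x ⬝ᵥ M *ᵥ x) := by
  refine (isCompact_sphere 0 1).eventually_forall_of_forall_eventually fun x hx => ?_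
  have hcont : Continuous fun p : Matrix n n 𝕜 × (n → 𝕜) =>
      RCLike.re (star p.2 ⬝ᵥ p.1 *ᵥ p.2) := by
    fun_prop
  exact continuousAt_const.eventually_lt hcont.continuousAt
    (hL.re_dotProduct_pos (ne_zero_of_mem_sphere one_ne_zero ⟨x, hx⟩))

theorem PosDef.eventually_posDef_of_tendsto {ι : Type*} {l : Filter ι} {M : ι → Matrix n n 𝕜}
    {L : Matrix n n 𝕜} (hL : L.PosDef) (hM : Tendsto M l (𝓝 L))
    (hherm : ∀ᶠ i in l, (M i).IsHermitian) : ∀ᶠ i in l, (M i).PosDef := by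
  filter_upwards [hherm, hM hL.eventually_re_pos_on_sphere] with i hi hpos
  exact posDef_of_re_pos_on_sphere hi hpos

end Openness

theorem PosDef.fromBlocks_zero {m n R : Type*} [Fintype m] [Fintype n] [Ring R] [PartialOrder R]
    [StarRing R] [StarOrderedRing R] {A : Matrix m m R} {D : Matrix n n R} (hA : A.PosDef)
    (hD : D.PosDef) : (fromBlocks A 0 0 D).PosDef := by
  refine .of_dotProduct_mulVec_pos (hA.isHermitian.fromBlocks (by simp) hD.isHermitian)
    fun x hx => ?_
  have hsplit : star x ⬝ᵥ fromBlocks A 0 0 D *ᵥ x =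
      star (x ∘ Sum.inl) ⬝ᵥ A *ᵥ (x ∘ Sum.inl) + star (x ∘ Sum.inr) ⬝ᵥ D *ᵥ (x ∘ Sum.inr) := by
    simp [dotProduct, Fintype.sum_sum_type, mulVec]
  have hx' : x ∘ Sum.inl ≠ 0 ∨ x ∘ Sum.inr ≠ 0 := by
    contrapose! hx
    exact Sum.elim_comp_inl_inr x ▸ hx.1 ▸ hx.2 ▸ Sum.elim_zero_zero
  rw [hsplit]
  rcases hx' with hl | hr
  · exact add_pos_of_pos_of_nonneg (hA.dotProduct_mulVec_pos hl)
      (hD.posSemidef.dotProduct_mulVec_nonneg _)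
  · exact add_pos_of_nonneg_of_pos (hA.posSemidef.dotProduct_mulVec_nonneg _)
      (hD.dotProduct_mulVec_pos hr)

section UpperBlocks

variable {l m o α : Type*}

def fromUpperBlocks₃ [Star α] (A : Matrix l l α) (B : Matrix l m α) (c : Matrix l o α)
    (D : Matrix m m α) (E : Matrix m o α) (F : Matrix o o α) :
    Matrix ((l ⊕ m) ⊕ o) ((l ⊕ m) ⊕ o) α :=
  fromBlocks (fromBlocks A B Bᴴ D) (fromRows c E) (fromRows c E)ᴴ F

theorem conjTranspose_diagonal_mul_fromUpperBlocks₃_mul_diagonal [CommSemiring α] [StarRing α]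
    [Fintype l] [Fintype m] [Fintype o] [DecidableEq l] [DecidableEq m] [DecidableEq o]
    (a b e : α) (A : Matrix l l α) (B : Matrix l m α) (c : Matrix l o α)
    (D : Matrix m m α) (E : Matrix m o α) (F : Matrix o o α) :
    (diagonal (Sum.elim (Sum.elim (fun _ : l => a) fun _ : m => b) fun _ : o => e))ᴴ *
        fromUpperBlocks₃ A B c D E F *
        diagonal (Sum.elim (Sum.elim (fun _ : l => a) fun _ : m => b) fun _ : o => e) =
      fromUpperBlocks₃ ((star a * a) • A) ((star a * b) • B) ((star a * e) • c)
        ((star b * b) • D) ((star b * e) • E) ((star e * e) • F) := by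
  ext ((i | i) | i) ((j | j) | j) <;>
    simp [fromUpperBlocks₃, mul_diagonal, diagonal_mul] <;> ring

theorem IsHermitian.fromUpperBlocks₃ [InvolutiveStar α] {A : Matrix l l α} (B : Matrix l m α)
    (c : Matrix l o α) {D : Matrix m m α} (E : Matrix m o α) {F : Matrix o o α}
    (hA : A.IsHermitian) (hD : D.IsHermitian) (hF : F.IsHermitian) :
    (fromUpperBlocks₃ A B c D E F).IsHermitian :=
  (hA.fromBlocks rfl hD).fromBlocks rfl hF

theorem PosDef.fromUpperBlocks₃_zero [Fintype l] [Fintype m] [Fintype o] [Ring α]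
    [PartialOrder α] [StarRing α] [StarOrderedRing α] {A : Matrix l l α} {D : Matrix m m α}
    {F : Matrix o o α} (hA : A.PosDef) (hD : D.PosDef) (hF : F.PosDef) :
    (fromUpperBlocks₃ A 0 0 D 0 F).PosDef := by
  simpa [fromUpperBlocks₃] using (hA.fromBlocks_zero hD).fromBlocks_zero hF

theorem _root_.Filter.Tendsto.fromUpperBlocks₃ [Star α] [TopologicalSpace α] [ContinuousStar α]
    {ι : Type*} {f : Filter ι}
    {A : ι → Matrix l l α} {B : ι → Matrix l m α} {c : ι → Matrix l o α}
    {D : ι → Matrix m m α} {E : ι → Matrix m o α} {F : ι → Matrix o o α}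
    {A₀ : Matrix l l α} {B₀ : Matrix l m α} {c₀ : Matrix l o α}
    {D₀ : Matrix m m α} {E₀ : Matrix m o α} {F₀ : Matrix o o α}
    (hA : Tendsto A f (𝓝 A₀)) (hB : Tendsto B f (𝓝 B₀)) (hc : Tendsto c f (𝓝 c₀))
    (hD : Tendsto D f (𝓝 D₀)) (hE : Tendsto E f (𝓝 E₀)) (hF : Tendsto F f (𝓝 F₀)) :
    Tendsto (fun i => fromUpperBlocks₃ (A i) (B i) (c i) (D i) (E i) (F i)) f
      (𝓝 (fromUpperBlocks₃ A₀ B₀ c₀ D₀ E₀ F₀)) := by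
  refine tendsto_pi_nhds.2 fun i => tendsto_pi_nhds.2 fun j => ?_
  change Tendsto (fun x => Matrix.fromUpperBlocks₃ (A x) (B x) (c x) (D x) (E x) (F x) i j) f
    (𝓝 (Matrix.fromUpperBlocks₃ A₀ B₀ c₀ D₀ E₀ F₀ i j))
  rcases i with (i | i) | i <;> rcases j with (j | j) | j <;>
    simp only [Matrix.fromUpperBlocks₃, fromBlocks_apply₁₁, fromBlocks_apply₁₂,
      fromBlocks_apply₂₁, fromBlocks_apply₂₂, fromRows_apply_inl, fromRows_apply_inr,
      conjTranspose_apply]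
  exacts [(hA.apply_nhds i).apply_nhds j, (hB.apply_nhds i).apply_nhds j,
    (hc.apply_nhds i).apply_nhds j, ((hB.apply_nhds j).apply_nhds i).star,
    (hD.apply_nhds i).apply_nhds j, (hE.apply_nhds i).apply_nhds j,
    ((hc.apply_nhds j).apply_nhds i).star, ((hE.apply_nhds j).apply_nhds i).star,
    (hF.apply_nhds i).apply_nhds j]

end UpperBlocks

section Scaling

variable {𝕜 l m o : Type*} [RCLike 𝕜] [Fintype l] [Fintype m] [Fintype o]
  [DecidableEq l] [DecidableEq m] [DecidableEq o]

noncomputable def blockScaling (t : ℝ) : Matrix ((l ⊕ m) ⊕ o) ((l ⊕ m) ⊕ o) 𝕜 :=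
  diagonal (Sum.elim (Sum.elim (fun _ => 1) fun _ => (√t : 𝕜)) fun _ => (t : 𝕜))

theorem isUnit_blockScaling {t : ℝ} (ht : 0 < t) :
    IsUnit (blockScaling t : Matrix ((l ⊕ m) ⊕ o) ((l ⊕ m) ⊕ o) 𝕜) := by
  refine isUnit_diagonal.2 (Pi.isUnit_iff.2 fun i => isUnit_iff_ne_zero.2 ?_)
  rcases i with (i | i) | i <;> simp [ht.ne', Real.sqrt_ne_zero'.2 ht]

theorem star_blockScaling_mul_fromUpperBlocks₃_mul_blockScaling {t : ℝ} (ht : 0 < t)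
    (A : Matrix l l 𝕜) (B : Matrix l m 𝕜) (c : Matrix l o 𝕜) (D : Matrix m m 𝕜)
    (E : Matrix m o 𝕜) (F : Matrix o o 𝕜) :
    star (blockScaling t) *
        fromUpperBlocks₃ A B c ((t : 𝕜)⁻¹ • D) ((t : 𝕜)⁻¹ • E) (((t : 𝕜) ^ 2)⁻¹ • F) *
        blockScaling t =
      fromUpperBlocks₃ A ((√t : 𝕜) • B) ((t : 𝕜) • c) D ((√t : 𝕜) • E) F := by
  have hsq : (√t : 𝕜) * √t = t := by exact_mod_cast Real.mul_self_sqrt ht.le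
  have ht0 : (t : 𝕜) ≠ 0 := by exact_mod_cast ht.ne'
  rw [blockScaling, star_eq_conjTranspose,
    conjTranspose_diagonal_mul_fromUpperBlocks₃_mul_diagonal]
  simp only [smul_smul, star_one, one_mul, one_smul, RCLike.star_def, RCLike.conj_ofReal, hsq]
  congr 2
  · rw [mul_inv_cancel₀ ht0, one_smul]
  · rw [mul_assoc, mul_inv_cancel₀ ht0, mul_one]
  · rw [← sq, mul_inv_cancel₀ (pow_ne_zero 2 ht0), one_smul]

end Scaling

theorem tendsto_fromUpperBlocks₃_sqrt_smul {𝕜 l m o : Type*} [RCLike 𝕜]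
    {A : ℝ → Matrix l l 𝕜} {B : ℝ → Matrix l m 𝕜} {c : ℝ → Matrix l o 𝕜}
    {D : ℝ → Matrix m m 𝕜} {E : ℝ → Matrix m o 𝕜} {F : ℝ → Matrix o o 𝕜}
    {A₀ : Matrix l l 𝕜} {B₀ : Matrix l m 𝕜} {c₀ : Matrix l o 𝕜}
    {D₀ : Matrix m m 𝕜} {E₀ : Matrix m o 𝕜} {F₀ : Matrix o o 𝕜}
    (hA : Tendsto A (𝓝[>] (0 : ℝ)) (𝓝 A₀)) (hB : Tendsto B (𝓝[>] (0 : ℝ)) (𝓝 B₀))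
    (hc : Tendsto c (𝓝[>] (0 : ℝ)) (𝓝 c₀)) (hD : Tendsto D (𝓝[>] (0 : ℝ)) (𝓝 D₀))
    (hE : Tendsto E (𝓝[>] (0 : ℝ)) (𝓝 E₀)) (hF : Tendsto F (𝓝[>] (0 : ℝ)) (𝓝 F₀)) :
    Tendsto (fun t : ℝ =>
        fromUpperBlocks₃ (A t) ((√t : 𝕜) • B t) ((t : 𝕜) • c t) (D t) ((√t : 𝕜) • E t) (F t))
      (𝓝[>] 0) (𝓝 (fromUpperBlocks₃ A₀ 0 0 D₀ 0 F₀)) := by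
  have hsqrt : Tendsto (fun t : ℝ => (√t : 𝕜)) (𝓝[>] 0) (𝓝 0) := by
    have hcont : Continuous fun t : ℝ => (√t : 𝕜) := by fun_prop
    simpa using (hcont.tendsto 0).mono_left nhdsWithin_le_nhds
  have hid : Tendsto (fun t : ℝ => (t : 𝕜)) (𝓝[>] 0) (𝓝 0) := by
    simpa using ((RCLike.continuous_ofReal (K := 𝕜)).tendsto 0).mono_left nhdsWithin_le_nhds
  exact hA.fromUpperBlocks₃ (by simpa using hsqrt.smul hB) (by simpa using hid.smul hc) hD
    (by simpa using hsqrt.smul hE) hF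

theorem eventually_posDef_fromUpperBlocks₃_of_tendsto {𝕜 l m o : Type*} [RCLike 𝕜]
    [Fintype l] [Fintype m] [Fintype o] [DecidableEq l] [DecidableEq m] [DecidableEq o]
    {A : ℝ → Matrix l l 𝕜} {B : ℝ → Matrix l m 𝕜} {c : ℝ → Matrix l o 𝕜}
    {D : ℝ → Matrix m m 𝕜} {E : ℝ → Matrix m o 𝕜} {F : ℝ → Matrix o o 𝕜}
    {A₀ : Matrix l l 𝕜} {B₀ : Matrix l m 𝕜} {c₀ : Matrix l o 𝕜}
    {D₀ : Matrix m m 𝕜} {E₀ : Matrix m o 𝕜} {F₀ : Matrix o o 𝕜}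
    (hA : Tendsto A (𝓝[>] (0 : ℝ)) (𝓝 A₀)) (hB : Tendsto B (𝓝[>] (0 : ℝ)) (𝓝 B₀))
    (hc : Tendsto c (𝓝[>] (0 : ℝ)) (𝓝 c₀)) (hD : Tendsto D (𝓝[>] (0 : ℝ)) (𝓝 D₀))
    (hE : Tendsto E (𝓝[>] (0 : ℝ)) (𝓝 E₀)) (hF : Tendsto F (𝓝[>] (0 : ℝ)) (𝓝 F₀))
    (hAh : ∀ᶠ t in 𝓝[>] (0 : ℝ), (A t).IsHermitian) (hDh : ∀ᶠ t in 𝓝[>] (0 : ℝ), (D t).IsHermitian)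
    (hFh : ∀ᶠ t in 𝓝[>] (0 : ℝ), (F t).IsHermitian)
    (hA₀ : A₀.PosDef) (hD₀ : D₀.PosDef) (hF₀ : F₀.PosDef) :
    ∀ᶠ t in 𝓝[>] (0 : ℝ), (fromUpperBlocks₃ (A t) (B t) (c t) ((t : 𝕜)⁻¹ • D t)
      ((t : 𝕜)⁻¹ • E t) (((t : 𝕜) ^ 2)⁻¹ • F t)).PosDef := by
  have hherm : ∀ᶠ t in 𝓝[>] (0 : ℝ), (fromUpperBlocks₃ (A t) ((√t : 𝕜) • B t) ((t : 𝕜) • c t)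
      (D t) ((√t : 𝕜) • E t) (F t)).IsHermitian := by
    filter_upwards [hAh, hDh, hFh] with t hAt hDt hFt
    exact hAt.fromUpperBlocks₃ _ _ _ hDt hFt
  filter_upwards [(hA₀.fromUpperBlocks₃_zero hD₀ hF₀).eventually_posDef_of_tendsto
    (tendsto_fromUpperBlocks₃_sqrt_smul hA hB hc hD hE hF) hherm, self_mem_nhdsWithin]
    with t hpos (ht : 0 < t)
  rwa [← star_blockScaling_mul_fromUpperBlocks₃_mul_blockScaling ht,
    IsUnit.posDef_star_left_conjugate_iff (isUnit_blockScaling ht)] at hpos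

end Matrix

/-- Asymptotic positivity of a family of Hermitian block matrices
`H(t) = [[A(t), B(t), c(t)], [B(t)*, D(t)/t, E(t)/t], [c(t)*, E(t)*/t, d(t)/t²]]`
whose blocks converge as `t → 0⁺`: if the Schur complement `A - c c*/d` is positive
definite and `D` is positive definite, then `H(t)` is positive definite for all
sufficiently small `t > 0`. -/
theorem stmt_10 (r s : ℕ) (t₀ : ℝ) (ht₀ : 0 < t₀)
    (A : ℝ → Matrix (Fin r) (Fin r) ℂ) (B : ℝ → Matrix (Fin r) (Fin s) ℂ)
    (c : ℝ → Matrix (Fin r) (Fin 1) ℂ) (D : ℝ → Matrix (Fin s) (Fin s) ℂ)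
    (E : ℝ → Matrix (Fin s) (Fin 1) ℂ) (d : ℝ → ℝ)
    (H : ℝ → Matrix ((Fin r ⊕ Fin s) ⊕ Fin 1) ((Fin r ⊕ Fin s) ⊕ Fin 1) ℂ)
    (hH : ∀ t ∈ Set.Ioo (0 : ℝ) t₀,
      H t = Matrix.fromBlocks
        (Matrix.fromBlocks (A t) (B t) (B t)ᴴ (((t : ℂ)⁻¹) • D t))
        (Matrix.fromRows (c t) (((t : ℂ)⁻¹) • E t))
        (Matrix.fromRows (c t) (((t : ℂ)⁻¹) • E t))ᴴ
        ((((t : ℂ) ^ 2)⁻¹) • Matrix.of fun (_ : Fin 1) (_ : Fin 1) => (d t : ℂ)))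
    (hAh : ∀ t ∈ Set.Ioo (0 : ℝ) t₀, (A t).IsHermitian)
    (hDh : ∀ t ∈ Set.Ioo (0 : ℝ) t₀, (D t).IsHermitian)
    (Alim : Matrix (Fin r) (Fin r) ℂ) (Blim : Matrix (Fin r) (Fin s) ℂ)
    (clim : Matrix (Fin r) (Fin 1) ℂ) (Dlim : Matrix (Fin s) (Fin s) ℂ)
    (Elim : Matrix (Fin s) (Fin 1) ℂ) (dlim : ℝ)
    (hA : Tendsto A (𝓝[>] (0 : ℝ)) (𝓝 Alim))
    (hB : Tendsto B (𝓝[>] (0 : ℝ)) (𝓝 Blim))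
    (hc : Tendsto c (𝓝[>] (0 : ℝ)) (𝓝 clim))
    (hD : Tendsto D (𝓝[>] (0 : ℝ)) (𝓝 Dlim))
    (hE : Tendsto E (𝓝[>] (0 : ℝ)) (𝓝 Elim))
    (hd : Tendsto d (𝓝[>] (0 : ℝ)) (𝓝 dlim)) (hdpos : 0 < dlim)
    (hSchur : (Alim - ((dlim : ℂ)⁻¹) • (clim * climᴴ)).PosDef)
    (hDlim : Dlim.PosDef) :
    ∃ t₁ : ℝ, 0 < t₁ ∧ ∀ t : ℝ, 0 < t → t < min t₁ t₀ → (H t).PosDef := by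
  have hIoo : Set.Ioo 0 t₀ ∈ 𝓝[>] (0 : ℝ) := Ioo_mem_nhdsGT ht₀
  have hAlim : Alim.PosDef := by
    have hcc : ((dlim : ℂ)⁻¹ • (clim * climᴴ)).PosSemidef :=
      (posSemidef_self_mul_conjTranspose clim).smul (by exact_mod_cast (inv_pos.2 hdpos).le)
    simpa using hSchur.add_posSemidef hcc
  have hdlim : (of fun _ _ => (dlim : ℂ) : Matrix (Fin 1) (Fin 1) ℂ).PosDef := by
    have hdiag : (of fun _ _ => (dlim : ℂ) : Matrix (Fin 1) (Fin 1) ℂ) =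
        diagonal fun _ => (dlim : ℂ) := by
      ext i j; fin_cases i; fin_cases j; rfl
    exact hdiag ▸ PosDef.diagonal fun _ => by exact_mod_cast hdpos
  have hof : Continuous fun z : ℂ => (of fun _ _ => z : Matrix (Fin 1) (Fin 1) ℂ) := by fun_prop
  have hev := eventually_posDef_fromUpperBlocks₃_of_tendsto hA hB hc hD hE
    ((hof.tendsto _).comp ((Complex.continuous_ofReal.tendsto _).comp hd))
    (eventually_of_mem hIoo hAh) (eventually_of_mem hIoo hDh)
    (Eventually.of_forall fun t => by ext i j; simp) hAlim hDlim hdlim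
  obtain ⟨t₁, ht₁, hsub⟩ :=
    mem_nhdsGT_iff_exists_Ioo_subset.1 (hev.and (eventually_of_mem hIoo fun _ ht => ht))
  refine ⟨t₁, ht₁, fun t ht htt₁ => ?_⟩
  obtain ⟨hpos, htI⟩ := hsub ⟨ht, htt₁.trans_le (min_le_left _ _)⟩
  rw [hH t htI]
  exact hpos
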